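/- Lemma 7.4: For any fixed element $0\in I$, one has $\overline{A}_1=B+s_0B$; that is, every element of $\overline{A}_1$ can be written as $x+s_0y$ with $x,y\in B$. -/
import Mathlib


/-!
Lemma 7.4. Let `M` be a Coxeter matrix on a finite set `I` (Mathlib convention:
`M i j = 0` encodes `m_{ij} = ∞`); let `Ā₁` be the quotient of the free `ℂ`-algebra on
`(s_i)` by `s_i² = 0` and `π_{m_{ij}}(s_i,s_j) = (-1)^{m_{ij}+1}π_{m_{ij}}(s_j,s_i)`
(`m_{ij} < ∞`), and let `B ⊆ Ā₁` be the unital subalgebra generated by the elements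
`s_i - s_j`. Then for any fixed `o ∈ I`, `Ā₁ = B + s_o B`: every element of `Ā₁` can be
written as `x + s_o y` with `x, y ∈ B`.
-/

noncomputable section

namespace TargetAlgs

variable {I : Type*}

/-- The alternating product `x * y * x * y * ⋯` with exactly `m` factors, starting with `x`. -/
def altProd {A : Type*} [Monoid A] (x y : A) : ℕ → A
  | 0 => 1
  | m + 1 => x * altProd y x m

/-- The defining relations of `A₁`: `s_i² = 1` and `(s_i s_j - 1)^{m_{ij}} = 0`
(`m_{ij} < ∞`). -/
inductive Rel1 (M : CoxeterMatrix I) : FreeAlgebra ℂ I → FreeAlgebra ℂ I → Prop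
  | sq (i : I) : Rel1 M (FreeAlgebra.ι ℂ i * FreeAlgebra.ι ℂ i) 1
  | unip (i j : I) (h : i ≠ j) (hm : M i j ≠ 0) :
      Rel1 M ((FreeAlgebra.ι ℂ i * FreeAlgebra.ι ℂ j - 1) ^ (M i j)) 0

/-- The algebra `A₁`. -/
abbrev A1 (M : CoxeterMatrix I) : Type _ := RingQuot (Rel1 M)

/-- The image of the generator `s_i` in `A₁`. -/
def σ1 (M : CoxeterMatrix I) (i : I) : A1 M :=
  RingQuot.mkAlgHom ℂ (Rel1 M) (FreeAlgebra.ι ℂ i)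

/-- The defining relations of `Ā₁`: `s_i² = 0` and
`π_{m_{ij}}(s_i,s_j) = (-1)^{m_{ij}+1} π_{m_{ij}}(s_j,s_i)` (`m_{ij} < ∞`). -/
inductive RelBar (M : CoxeterMatrix I) : FreeAlgebra ℂ I → FreeAlgebra ℂ I → Prop
  | sq (i : I) : RelBar M (FreeAlgebra.ι ℂ i * FreeAlgebra.ι ℂ i) 0
  | braid (i j : I) (h : i ≠ j) (hm : M i j ≠ 0) :
      RelBar M (altProd (FreeAlgebra.ι ℂ i) (FreeAlgebra.ι ℂ j) (M i j))
        ((-1 : FreeAlgebra ℂ I) ^ (M i j + 1) *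
          altProd (FreeAlgebra.ι ℂ j) (FreeAlgebra.ι ℂ i) (M i j))

/-- The algebra `Ā₁`. -/
abbrev A1bar (M : CoxeterMatrix I) : Type _ := RingQuot (RelBar M)

/-- The image of the generator `s_i` in `Ā₁`. -/
def σbar (M : CoxeterMatrix I) (i : I) : A1bar M :=
  RingQuot.mkAlgHom ℂ (RelBar M) (FreeAlgebra.ι ℂ i)

/-- The subalgebra `B ⊆ Ā₁` generated by the elements `s_i - s_j`. -/
def Bsub (M : CoxeterMatrix I) : Subalgebra ℂ (A1bar M) :=
  Algebra.adjoin ℂ {z : A1bar M | ∃ i j : I, z = σbar M i - σbar M j}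

lemma sq_zero (M : CoxeterMatrix I) (i : I) : σbar M i * σbar M i = 0 := by
  have := RingQuot.mkAlgHom_rel ℂ (RelBar.sq (M := M) i)
  simpa [σbar] using this

lemma key_eq (M : CoxeterMatrix I) (i o : I) (x y : A1bar M) :
    σbar M i * (x + σbar M o * y) =
      ((σbar M i - σbar M o) * x - (σbar M i - σbar M o) * ((σbar M i - σbar M o) * y))
        + σbar M o * (x - (σbar M i - σbar M o) * y) := by
  have hi := sq_zero M i
  have ho := sq_zero M o
  simp only [mul_add, add_mul, sub_mul, mul_sub, ← mul_assoc, hi, ho, zero_mul]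
  abel

theorem lemma_7_4' (M : CoxeterMatrix I) (o : I) :
    ∀ z : A1bar M, ∃ x ∈ Bsub M, ∃ y ∈ Bsub M, z = x + σbar M o * y := by
  have hgen : ∀ i : I, σbar M i - σbar M o ∈ Bsub M := fun i =>
    Algebra.subset_adjoin ⟨i, o, rfl⟩
  have key : ∀ a : FreeAlgebra ℂ I, ∀ x ∈ Bsub M, ∀ y ∈ Bsub M,
      ∃ x' ∈ Bsub M, ∃ y' ∈ Bsub M,
        RingQuot.mkAlgHom ℂ (RelBar M) a * (x + σbar M o * y) = x' + σbar M o * y' := by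
    intro a
    induction a using FreeAlgebra.induction with
    | grade0 c =>
        intro x hx y hy
        refine ⟨c • x, Subalgebra.smul_mem _ hx c, c • y, Subalgebra.smul_mem _ hy c, ?_⟩
        rw [AlgHom.commutes, Algebra.algebraMap_eq_smul_one, smul_mul_assoc, one_mul, smul_add, mul_smul_comm]
    | grade1 i =>
        intro x hx y hy
        refine ⟨(σbar M i - σbar M o) * x - (σbar M i - σbar M o) * ((σbar M i - σbar M o) * y),
          Subalgebra.sub_mem _ (Subalgebra.mul_mem _ (hgen i) hx)
            (Subalgebra.mul_mem _ (hgen i) (Subalgebra.mul_mem _ (hgen i) hy)),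
          x - (σbar M i - σbar M o) * y,
          Subalgebra.sub_mem _ hx (Subalgebra.mul_mem _ (hgen i) hy), ?_⟩
        exact key_eq M i o x y
    | mul a b iha ihb =>
        intro x hx y hy
        obtain ⟨x', hx', y', hy', h1⟩ := ihb x hx y hy
        obtain ⟨x'', hx'', y'', hy'', h2⟩ := iha x' hx' y' hy'
        exact ⟨x'', hx'', y'', hy'', by rw [map_mul, mul_assoc, h1, h2]⟩
    | add a b iha ihb =>
        intro x hx y hy
        obtain ⟨x', hx', y', hy', h1⟩ := iha x hx y hy
        obtain ⟨x'', hx'', y'', hy'', h2⟩ := ihb x hx y hy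
        refine ⟨x' + x'', Subalgebra.add_mem _ hx' hx'', y' + y'',
          Subalgebra.add_mem _ hy' hy'', ?_⟩
        rw [map_add, add_mul, h1, h2, mul_add]
        abel
  intro z
  obtain ⟨a, rfl⟩ := RingQuot.mkAlgHom_surjective ℂ (RelBar M) z
  obtain ⟨x', hx', y', hy', h⟩ := key a 1 (Subalgebra.one_mem _) 0 (Subalgebra.zero_mem _)
  refine ⟨x', hx', y', hy', ?_⟩
  simpa using h

end TargetAlgs

open TargetAlgs in
/-- Lemma 7.4 of Etingof–Rains. -/
theorem lemma_7_4 {I : Type*} [Fintype I] [DecidableEq I] (M : CoxeterMatrix I) (o : I) :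
    ∀ z : A1bar M, ∃ x ∈ Bsub M, ∃ y ∈ Bsub M, z = x + σbar M o * y :=
  TargetAlgs.lemma_7_4' M o
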